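/- arXiv:0908.3577 — 3 statements merged into one kernel-verified Lean document; each statement's English description precedes it below -/
import Mathlib

section
/- Let I be a closed ideal of a Banach algebra A. If A is weakly amenable and I has the approximate trace extension property, then A/I is approximately weakly amenable. -/
open ContinuousLinearMap Filter Topology

open ContinuousLinearMap Filter Topology

/-- A Banach `A`-bimodule: a complete normed `ℂ`-space with commuting continuous
left and right `A`-actions, jointly bounded and bilinear. -/
structure BBimod (A : Type) [NonUnitalNormedRing A] [NormedSpace ℂ A] where
  carrier : Type
  [grp : NormedAddCommGroup carrier]
  [mod : NormedSpace ℂ carrier]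
  [complete : CompleteSpace carrier]
  lsmul : A → carrier →L[ℂ] carrier
  rsmul : A → carrier →L[ℂ] carrier
  lsmul_add : ∀ a b, lsmul (a + b) = lsmul a + lsmul b
  rsmul_add : ∀ a b, rsmul (a + b) = rsmul a + rsmul b
  lsmul_smul : ∀ (c : ℂ) (a), lsmul (c • a) = c • lsmul a
  rsmul_smul : ∀ (c : ℂ) (a), rsmul (c • a) = c • rsmul a
  lsmul_mul : ∀ a b, lsmul (a * b) = (lsmul a).comp (lsmul b)
  rsmul_mul : ∀ a b, rsmul (a * b) = (rsmul b).comp (rsmul a)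
  lsmul_rsmul : ∀ a b, (lsmul a).comp (rsmul b) = (rsmul b).comp (lsmul a)
  bound : ∃ C : ℝ, ∀ a, ‖lsmul a‖ ≤ C * ‖a‖ ∧ ‖rsmul a‖ ≤ C * ‖a‖

attribute [instance] BBimod.grp BBimod.mod BBimod.complete

variable {A : Type} [NonUnitalNormedRing A] [NormedSpace ℂ A]

/-- The dual of a Banach bimodule, with the canonical dual actions
`⟨u, Λ·a⟩ = ⟨a·u, Λ⟩` and `⟨u, a·Λ⟩ = ⟨u·a, Λ⟩`. -/
noncomputable def BBimod.dual (M : BBimod A) : BBimod A where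
  carrier := M.carrier →L[ℂ] ℂ
  lsmul a := (compL ℂ M.carrier M.carrier ℂ).flip (M.rsmul a)
  rsmul a := (compL ℂ M.carrier M.carrier ℂ).flip (M.lsmul a)
  lsmul_add a b := by ext Λ x; simp [M.rsmul_add]
  rsmul_add a b := by ext Λ x; simp [M.lsmul_add]
  lsmul_smul c a := by ext Λ x; simp [M.rsmul_smul]
  rsmul_smul c a := by ext Λ x; simp [M.lsmul_smul]
  lsmul_mul a b := by ext Λ x; simp [M.rsmul_mul]
  rsmul_mul a b := by ext Λ x; simp [M.lsmul_mul]
  lsmul_rsmul a b := by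
    ext Λ x
    have h : M.lsmul b (M.rsmul a x) = M.rsmul a (M.lsmul b x) := by
      have := congrArg (fun T : M.carrier →L[ℂ] M.carrier => T x) (M.lsmul_rsmul b a)
      simpa using this
    simp [h]
  bound := by
    obtain ⟨C, hC⟩ := M.bound
    refine ⟨C, fun a => ⟨?_, ?_⟩⟩
    · refine opNorm_le_bound _ ?_ fun Λ => ?_
      · exact le_trans (norm_nonneg _) (hC a).2
      · calc ‖Λ.comp (M.rsmul a)‖ ≤ ‖Λ‖ * ‖M.rsmul a‖ := opNorm_comp_le _ _
          _ ≤ (C * ‖a‖) * ‖Λ‖ := by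
              rw [mul_comm]
              exact mul_le_mul_of_nonneg_right (hC a).2 (norm_nonneg _)
    · refine opNorm_le_bound _ ?_ fun Λ => ?_
      · exact le_trans (norm_nonneg _) (hC a).1
      · calc ‖Λ.comp (M.lsmul a)‖ ≤ ‖Λ‖ * ‖M.lsmul a‖ := opNorm_comp_le _ _
          _ ≤ (C * ‖a‖) * ‖Λ‖ := by
              rw [mul_comm]
              exact mul_le_mul_of_nonneg_right (hC a).1 (norm_nonneg _)

variable (A) [IsScalarTower ℂ A A] [SMulCommClass ℂ A A] [CompleteSpace A]

/-- `A` as a Banach bimodule over itself. -/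
noncomputable def BBimod.base : BBimod A where
  carrier := A
  lsmul a := ContinuousLinearMap.mul ℂ A a
  rsmul a := (ContinuousLinearMap.mul ℂ A).flip a
  lsmul_add a b := by ext x; simp [add_mul]
  rsmul_add a b := by ext x; simp [mul_add]
  lsmul_smul c a := by ext x; simp [smul_mul_assoc]
  rsmul_smul c a := by ext x; simp [mul_smul_comm]
  lsmul_mul a b := by ext x; simp [mul_assoc]
  rsmul_mul a b := by ext x; simp [mul_assoc]
  lsmul_rsmul a b := by ext x; simp [mul_assoc]
  bound := by
    refine ⟨1, fun a => ⟨?_, ?_⟩⟩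
    · simpa using ContinuousLinearMap.opNorm_mul_apply_le ℂ A a
    · refine le_trans (opNorm_le_bound _ (norm_nonneg a) fun x => ?_) (by simp)
      simpa [mul_comm] using norm_mul_le x a


/-- The `n`-th dual `A^(n)` of `A` as a Banach `A`-bimodule. -/
noncomputable def iterDual : ℕ → BBimod A
  | 0 => BBimod.base A
  | n + 1 => (iterDual n).dual

variable {A}

/-- `D` is a derivation from `A` into the Banach bimodule `M`. -/
def IsDerivation (M : BBimod A) (D : A →L[ℂ] M.carrier) : Prop :=
  ∀ a b : A, D (a * b) = M.lsmul a (D b) + M.rsmul b (D a)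

/-- `D` is an inner derivation. -/
def IsInner (M : BBimod A) (D : A →L[ℂ] M.carrier) : Prop :=
  ∃ x : M.carrier, ∀ a : A, D a = M.lsmul a x - M.rsmul a x

/-- `D` is approximately inner: there is a net `(x_i)` in `M` with
`D a = lim_i (a·x_i − x_i·a)` for every `a`. -/
def IsApproxInner (M : BBimod A) (D : A →L[ℂ] M.carrier) : Prop :=
  ∃ (ι : Type) (l : Filter ι) (x : ι → M.carrier), l.NeBot ∧
    ∀ a : A, Tendsto (fun i => M.lsmul a (x i) - M.rsmul a (x i)) l (𝓝 (D a))

variable (A)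

/-- `A` is weakly amenable. -/
def WeaklyAmenable : Prop :=
  ∀ D : A →L[ℂ] (iterDual A 1).carrier, IsDerivation (iterDual A 1) D → IsInner (iterDual A 1) D

/-- `A` is approximately `n`-weakly amenable. -/
def ApproxNWeaklyAmenable (n : ℕ) : Prop :=
  ∀ D : A →L[ℂ] (iterDual A n).carrier,
    IsDerivation (iterDual A n) D → IsApproxInner (iterDual A n) D

/-- `A` is `n`-weakly amenable. -/
def NWeaklyAmenable (n : ℕ) : Prop :=
  ∀ D : A →L[ℂ] (iterDual A n).carrier,
    IsDerivation (iterDual A n) D → IsInner (iterDual A n) D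

/-- `A` is approximately weakly amenable. -/
def ApproxWeaklyAmenable : Prop := ApproxNWeaklyAmenable A 1

/-- `A` is approximately amenable: every continuous derivation into the dual of a
Banach `A`-bimodule is approximately inner. -/
def ApproxAmenable : Prop :=
  ∀ (X : BBimod A) (D : A →L[ℂ] X.dual.carrier), IsDerivation X.dual D → IsApproxInner X.dual D

section Concrete
variable (A : Type) [NonUnitalNormedRing A] [NormedSpace ℂ A]
  [IsScalarTower ℂ A A] [SMulCommClass ℂ A A]

/-- The left action of `A` on its dual `A*`: `(a·f)(b) = f (b * a)`. -/
noncomputable def lact (a : A) (f : A →L[ℂ] ℂ) : A →L[ℂ] ℂ :=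
  f.comp ((ContinuousLinearMap.mul ℂ A).flip a)

/-- The right action of `A` on its dual `A*`: `(f·a)(b) = f (a * b)`. -/
noncomputable def ract (a : A) (f : A →L[ℂ] ℂ) : A →L[ℂ] ℂ :=
  f.comp (ContinuousLinearMap.mul ℂ A a)

variable [CompleteSpace A]

/-- `A` is approximately cyclic amenable: every continuous cyclic derivation
`D : A → A*` is approximately inner. -/
def ApproxCyclicAmenable : Prop :=
  ∀ D : A →L[ℂ] (A →L[ℂ] ℂ),
    (∀ a b : A, D (a * b) = lact A a (D b) + ract A b (D a)) →
    (∀ a b : A, D a b + D b a = 0) →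
    ∃ (ι : Type) (l : Filter ι) (x : ι → (A →L[ℂ] ℂ)), l.NeBot ∧
      ∀ a : A, Tendsto (fun i => lact A a (x i) - ract A a (x i)) l (𝓝 (D a))

/-- `A` has a bounded (two-sided) approximate identity. -/
def HasBAI : Prop :=
  ∃ (ι : Type) (l : Filter ι) (e : ι → A) (C : ℝ), l.NeBot ∧ (∀ i, ‖e i‖ ≤ C) ∧
    ∀ a : A, Tendsto (fun i => e i * a) l (𝓝 a) ∧ Tendsto (fun i => a * e i) l (𝓝 a)

end Concrete

section TEP
variable (A : Type) [NonUnitalNormedRing A] [NormedSpace ℂ A]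
  [IsScalarTower ℂ A A] [SMulCommClass ℂ A A] [CompleteSpace A]

/-- The closed ideal `I` has the approximate trace extension property: every
`A`-central functional `λ ∈ I*` extends to a net `(Λ_α) ⊆ A*` with `Λ_α|_I = λ`
and `a·Λ_α − Λ_α·a → 0` for each `a ∈ A`. -/
def ApproxTraceExt (I : Submodule ℂ A)
    (hl : ∀ (a x : A), x ∈ I → a * x ∈ I) (hr : ∀ (a x : A), x ∈ I → x * a ∈ I) : Prop :=
  ∀ lam : ↥I →L[ℂ] ℂ,
    (∀ (a : A) (x : ↥I), lam ⟨(x : A) * a, hr a x x.2⟩ = lam ⟨a * (x : A), hl a x x.2⟩) →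
    ∃ (ι : Type) (l : Filter ι) (L : ι → (A →L[ℂ] ℂ)), l.NeBot ∧
      (∀ (i : ι) (x : ↥I), L i (x : A) = lam x) ∧
      (∀ a : A, Tendsto (fun i => lact A a (L i) - ract A a (L i)) l (𝓝 0))

end TEP
variable (A : Type) [NonUnitalNormedRing A] [NormedSpace ℂ A]
  [IsScalarTower ℂ A A] [SMulCommClass ℂ A A] [CompleteSpace A]

/-!
Pull a derivation `D : Q → Q*` back along `π` to a derivation `A → A*`; weak amenability
implements it by some `f ∈ A*`. The pullback vanishes on `I`, so `f` restricts to a trace on `I`,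
and the approximate trace extension property yields `Λᵢ ∈ A*` agreeing with `f` on `I` with
`a·Λᵢ − Λᵢ·a → 0`. Each `f − Λᵢ` vanishes on `I = ker π` and descends to `hᵢ ∈ Q*`, and after
composing with `π`, `π(a)·hᵢ − hᵢ·π(a) = D(π a) − (a·Λᵢ − Λᵢ·a)`. By the open mapping theorem,
convergence after composing with `π` already is convergence in `Q*`.
-/

namespace ContinuousLinearMap

variable {𝕜 E F G : Type*} [NontriviallyNormedField 𝕜]
  [NormedAddCommGroup E] [NormedSpace 𝕜 E] [NormedAddCommGroup F] [NormedSpace 𝕜 F]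
  [NormedAddCommGroup G] [NormedSpace 𝕜 G] [CompleteSpace E] [CompleteSpace F]
  {π : E →L[𝕜] F}

theorem exists_comp_eq_of_ker_le (hπ : Function.Surjective π) (g : E →L[𝕜] G)
    (hg : LinearMap.ker (π : E →ₗ[𝕜] F) ≤ LinearMap.ker (g : E →ₗ[𝕜] G)) :
    ∃ h : F →L[𝕜] G, h.comp π = g := by
  let h : F →ₗ[𝕜] G :=
    ((LinearMap.ker (π : E →ₗ[𝕜] F)).liftQ g hg).comp
      ((π : E →ₗ[𝕜] F).quotKerEquivOfSurjective hπ).symm.toLinearMap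
  have h_comp : ∀ x, h (π x) = g x := fun x =>
    congrArg ((LinearMap.ker (π : E →ₗ[𝕜] F)).liftQ (g : E →ₗ[𝕜] G) hg)
      ((π : E →ₗ[𝕜] F).quotKerEquivOfSurjective_symm_apply hπ x)
  have h_cont : Continuous h := by
    rw [(π.isQuotientMap hπ).continuous_iff]
    simpa [Function.comp_def, h_comp] using g.continuous
  exact ⟨⟨h, h_cont⟩, ext h_comp⟩

theorem tendsto_of_tendsto_comp_of_surjective (hπ : Function.Surjective π) {ι : Type*} {l : Filter ι}
    {φ : ι → F →L[𝕜] G} {ψ : F →L[𝕜] G}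
    (h : Tendsto (fun i => (φ i).comp π) l (𝓝 (ψ.comp π))) : Tendsto φ l (𝓝 ψ) := by
  obtain ⟨K, hK0, hK⟩ := π.exists_preimage_norm_le hπ
  have norm_le : ∀ χ : F →L[𝕜] G, ‖χ‖ ≤ K * ‖χ.comp π‖ := fun χ =>
    opNorm_le_bound _ (by positivity) fun y => by
      obtain ⟨x, rfl, hx⟩ := hK y
      calc ‖χ (π x)‖ = ‖χ.comp π x‖ := rfl
        _ ≤ ‖χ.comp π‖ * ‖x‖ := le_opNorm _ _
        _ ≤ ‖χ.comp π‖ * (K * ‖π x‖) := by gcongr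
        _ = K * ‖χ.comp π‖ * ‖π x‖ := by ring
  rw [tendsto_iff_norm_sub_tendsto_zero] at h ⊢
  refine squeeze_zero (fun _ => norm_nonneg _) (fun i => ?_) (by simpa using h.const_mul K)
  simpa [sub_comp] using norm_le (φ i - ψ)

end ContinuousLinearMap

section DualPullback

variable {A Q : Type} [NonUnitalNormedRing A] [NormedSpace ℂ A]
  [NonUnitalNormedRing Q] [NormedSpace ℂ Q] {π : A →L[ℂ] Q}

variable (π) in
noncomputable def dualPullback (D : Q →L[ℂ] (Q →L[ℂ] ℂ)) : A →L[ℂ] (A →L[ℂ] ℂ) :=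
  ((compL ℂ A Q ℂ).flip π).comp (D.comp π)

@[simp]
theorem dualPullback_apply (D : Q →L[ℂ] (Q →L[ℂ] ℂ)) (a b : A) :
    dualPullback π D a b = D (π a) (π b) :=
  rfl

variable [IsScalarTower ℂ A A] [SMulCommClass ℂ A A] [IsScalarTower ℂ Q Q] [SMulCommClass ℂ Q Q]

@[simp]
theorem lact_apply (a b : A) (f : A →L[ℂ] ℂ) : lact A a f b = f (b * a) := rfl

@[simp]
theorem ract_apply (a b : A) (f : A →L[ℂ] ℂ) : ract A a f b = f (a * b) := rfl

theorem weaklyAmenable_iff [CompleteSpace A] :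
    WeaklyAmenable A ↔ ∀ D : A →L[ℂ] (A →L[ℂ] ℂ),
      (∀ a b, D (a * b) = lact A a (D b) + ract A b (D a)) →
      ∃ f : A →L[ℂ] ℂ, ∀ a, D a = lact A a f - ract A a f :=
  Iff.rfl

theorem approxWeaklyAmenable_iff [CompleteSpace A] :
    ApproxWeaklyAmenable A ↔ ∀ D : A →L[ℂ] (A →L[ℂ] ℂ),
      (∀ a b, D (a * b) = lact A a (D b) + ract A b (D a)) →
      ∃ (ι : Type) (l : Filter ι) (x : ι → A →L[ℂ] ℂ), l.NeBot ∧
        ∀ a, Tendsto (fun i => lact A a (x i) - ract A a (x i)) l (𝓝 (D a)) :=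
  Iff.rfl

theorem lact_comp (hπ : ∀ a b : A, π (a * b) = π a * π b) (a : A) (φ : Q →L[ℂ] ℂ) :
    (lact Q (π a) φ).comp π = lact A a (φ.comp π) := by
  ext b; simp [hπ]

theorem ract_comp (hπ : ∀ a b : A, π (a * b) = π a * π b) (a : A) (φ : Q →L[ℂ] ℂ) :
    (ract Q (π a) φ).comp π = ract A a (φ.comp π) := by
  ext b; simp [hπ]

theorem dualPullback_mul (hπ : ∀ a b : A, π (a * b) = π a * π b) {D : Q →L[ℂ] (Q →L[ℂ] ℂ)}
    (hD : ∀ p q, D (p * q) = lact Q p (D q) + ract Q q (D p)) (a b : A) :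
    dualPullback π D (a * b) = lact A a (dualPullback π D b) + ract A b (dualPullback π D a) := by
  ext x
  simpa [hπ] using congr($(hD (π a) (π b)) (π x))

end DualPullback

theorem quotient_approxWeaklyAmenable_of_weaklyAmenable_of_approxTraceExt
    (I : Submodule ℂ A)
    (hl : ∀ (a x : A), x ∈ I → a * x ∈ I) (hr : ∀ (a x : A), x ∈ I → x * a ∈ I)
    {Q : Type} [NonUnitalNormedRing Q] [NormedSpace ℂ Q]
    [IsScalarTower ℂ Q Q] [SMulCommClass ℂ Q Q] [CompleteSpace Q]
    (π : A →L[ℂ] Q)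
    (hπ_mul : ∀ a b : A, π (a * b) = π a * π b)
    (hπ_surj : Function.Surjective π)
    (hπ_ker : ∀ a : A, π a = 0 ↔ a ∈ I)
    (hA : WeaklyAmenable A) (hTEP : ApproxTraceExt A I hl hr) :
    ApproxWeaklyAmenable Q := by
  rw [approxWeaklyAmenable_iff]
  intro D hD
  obtain ⟨f, hf⟩ := weaklyAmenable_iff.1 hA _ (dualPullback_mul hπ_mul hD)
  have hf_trace : ∀ (a : A) (x : I), f (x * a) = f (a * x) := fun a x => by
    have hDx : dualPullback π D a x = 0 := by simp [(hπ_ker x).2 x.2]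
    simpa [hf, sub_eq_zero] using hDx
  obtain ⟨ι, l, L, hne, hLI, hL⟩ := hTEP (f.comp I.subtypeL) (by simpa using hf_trace)
  have hker : ∀ i, LinearMap.ker (π : A →ₗ[ℂ] Q) ≤
      LinearMap.ker ((f - L i : A →L[ℂ] ℂ) : A →ₗ[ℂ] ℂ) := fun i x hx => by
    simpa [sub_eq_zero] using (hLI i ⟨x, (hπ_ker x).1 hx⟩).symm
  choose h hh using fun i => exists_comp_eq_of_ker_le hπ_surj (f - L i) (hker i)
  refine ⟨ι, l, h, hne, fun q => ?_⟩
  obtain ⟨a, rfl⟩ := hπ_surj q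
  refine tendsto_of_tendsto_comp_of_surjective hπ_surj ?_
  have hcomp : ∀ i, (lact Q (π a) (h i) - ract Q (π a) (h i)).comp π =
      (D (π a)).comp π - (lact A a (L i) - ract A a (L i)) := fun i => by
    have hDa : (D (π a)).comp π = lact A a f - ract A a f := hf a
    rw [sub_comp, lact_comp hπ_mul, ract_comp hπ_mul, hh i, hDa]
    ext b
    simp only [sub_apply, lact_apply, ract_apply]
    ring
  simpa [hcomp] using tendsto_const_nhds.sub (hL a)
end

section
/- Let I be a closed ideal of a Banach algebra A. If I is weakly amenable and A/I is approximately weakly amenable, then A is approximately weakly amenable. -/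
open ContinuousLinearMap Filter Topology

open ContinuousLinearMap Filter Topology

noncomputable instance NonUnitalSubalgebra.normedSpaceComplex {A : Type} [NonUnitalNormedRing A]
    [NormedSpace ℂ A] (I : NonUnitalSubalgebra ℂ A) : NormedSpace ℂ I :=
  SubmoduleClass.toNormedSpace I

variable {A : Type} [NonUnitalNormedRing A] [NormedSpace ℂ A]

variable (A) [IsScalarTower ℂ A A] [SMulCommClass ℂ A A] [CompleteSpace A]

variable {A}

variable (A)

/-!
Restricting a derivation `D : A → A*` to `I` and using weak amenability of `I` produces a
functional `F ∈ A*`, extended from `I` by Hahn–Banach, such that `D₁ = D - ad F` vanishes on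
`I × I`. Weak amenability of `I` also forces every functional on `I` that kills all products to
vanish, and the Leibniz rule then shows that `D₁` vanishes on `I × A` and on `A × I`. So `D₁`
descends, by the open mapping theorem, to a derivation of `A/I`; pulling back the approximating
net for it and adding `F` approximates `D`.
-/

section Lift

variable {𝕜 E F G : Type*} [NontriviallyNormedField 𝕜]
  [NormedAddCommGroup E] [NormedSpace 𝕜 E] [CompleteSpace E]
  [NormedAddCommGroup F] [NormedSpace 𝕜 F] [CompleteSpace F]
  [NormedAddCommGroup G] [NormedSpace 𝕜 G]

lemma ContinuousLinearMap.exists_comp_eq_of_surjective (π : E →L[𝕜] F)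
    (hπ : Function.Surjective π) (T : E →L[𝕜] G) (hT : ∀ x, π x = 0 → T x = 0) :
    ∃ S : F →L[𝕜] G, ∀ x, S (π x) = T x := by
  let S : F →ₗ[𝕜] G := (LinearMap.ker (π : E →ₗ[𝕜] F)).liftQ T hT ∘ₗ
    ((π : E →ₗ[𝕜] F).quotKerEquivOfSurjective hπ).symm
  have hS : ∀ x, S (π x) = T x := fun x => by
    change (LinearMap.ker (π : E →ₗ[𝕜] F)).liftQ (T : E →ₗ[𝕜] G) hT
      (((π : E →ₗ[𝕜] F).quotKerEquivOfSurjective hπ).symm ((π : E →ₗ[𝕜] F) x)) = T x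
    rw [LinearMap.quotKerEquivOfSurjective_symm_apply]
    rfl
  have hcont : Continuous S :=
    (π.isQuotientMap hπ).continuous_iff.2 (by simpa [Function.comp_def, hS] using T.continuous)
  exact ⟨⟨S, hcont⟩, hS⟩

lemma ContinuousLinearMap.exists_comp₂_eq_of_surjective (π : E →L[𝕜] F)
    (hπ : Function.Surjective π) (T : E →L[𝕜] E →L[𝕜] G) (hT : ∀ x, π x = 0 → T x = 0)
    (hT' : ∀ a x, π x = 0 → T a x = 0) :
    ∃ S : F →L[𝕜] F →L[𝕜] G, ∀ a b, S (π a) (π b) = T a b := by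
  obtain ⟨S₁, hS₁⟩ := π.exists_comp_eq_of_surjective hπ T.flip fun x hx => by
    ext a
    exact hT' a x hx
  obtain ⟨S, hS⟩ := π.exists_comp_eq_of_surjective hπ S₁.flip fun x hx => by
    ext q
    obtain ⟨b, rfl⟩ := hπ q
    simp [hS₁, hT x hx]
  exact ⟨S, fun a b => by simp [hS, hS₁]⟩

end Lift

section DualDerivations

variable {A : Type} [NonUnitalNormedRing A] [NormedSpace ℂ A]

lemma IsDerivation.sub {M : BBimod A} {D D' : A →L[ℂ] M.carrier} (hD : IsDerivation M D)
    (hD' : IsDerivation M D') : IsDerivation M (D - D') := by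
  intro a b
  simp only [sub_apply, hD a b, hD' a b, map_sub]
  abel

variable [IsScalarTower ℂ A A] [SMulCommClass ℂ A A]

noncomputable def innerDual (f : A →L[ℂ] ℂ) : A →L[ℂ] (A →L[ℂ] ℂ) :=
  compL ℂ A A ℂ f ∘L (ContinuousLinearMap.mul ℂ A).flip -
    compL ℂ A A ℂ f ∘L ContinuousLinearMap.mul ℂ A

@[simp]
lemma innerDual_apply (f : A →L[ℂ] ℂ) (a c : A) : innerDual f a c = f (c * a) - f (a * c) := rfl

lemma innerDual_add (f g : A →L[ℂ] ℂ) : innerDual (f + g) = innerDual f + innerDual g := by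
  ext a c
  simp only [innerDual_apply, add_apply]
  ring

section Complete

variable [CompleteSpace A]

lemma isDerivation_iterDual_one_iff {D : A →L[ℂ] (A →L[ℂ] ℂ)} :
    IsDerivation (iterDual A 1) D ↔ ∀ a b c, D (a * b) c = D b (c * a) + D a (b * c) :=
  forall₂_congr fun _ _ => ContinuousLinearMap.ext_iff

lemma isInner_iterDual_one_iff {D : A →L[ℂ] (A →L[ℂ] ℂ)} :
    IsInner (iterDual A 1) D ↔ ∃ f : A →L[ℂ] ℂ, ∀ a, D a = innerDual f a :=
  Iff.rfl

lemma isApproxInner_iterDual_one_iff {D : A →L[ℂ] (A →L[ℂ] ℂ)} :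
    IsApproxInner (iterDual A 1) D ↔ ∃ (ι : Type) (l : Filter ι) (g : ι → A →L[ℂ] ℂ),
      l.NeBot ∧ ∀ a, Tendsto (fun i => innerDual (g i) a) l (𝓝 (D a)) :=
  Iff.rfl

lemma isDerivation_innerDual (f : A →L[ℂ] ℂ) : IsDerivation (iterDual A 1) (innerDual f) := by
  refine isDerivation_iterDual_one_iff.2 fun a b c => ?_
  simp only [innerDual_apply, mul_assoc]
  ring

lemma IsApproxInner.add_innerDual {D : A →L[ℂ] (A →L[ℂ] ℂ)}
    (hD : IsApproxInner (iterDual A 1) D) (f : A →L[ℂ] ℂ) :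
    IsApproxInner (iterDual A 1) (D + innerDual f) := by
  obtain ⟨ι, l, g, hl, hg⟩ := isApproxInner_iterDual_one_iff.1 hD
  refine isApproxInner_iterDual_one_iff.2 ⟨ι, l, fun i => g i + f, hl, fun a => ?_⟩
  simpa only [innerDual_add, add_apply] using (hg a).add_const (innerDual f a)

/-- Weakly amenable algebras are essential, in dual form: otherwise the derivation
`a ↦ φ a • φ` would be inner, forcing `φ x ^ 2 = 0`. -/
lemma WeaklyAmenable.eq_zero_of_map_mul_eq_zero (hA : WeaklyAmenable A) (φ : A →L[ℂ] ℂ)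
    (hφ : ∀ x y, φ (x * y) = 0) : φ = 0 := by
  have hder : IsDerivation (iterDual A 1) (φ.smulRight φ) := by
    refine isDerivation_iterDual_one_iff.2 fun a b c => ?_
    change φ (a * b) * φ c = φ b * φ (c * a) + φ a * φ (b * c)
    simp only [hφ, zero_mul, mul_zero, add_zero]
  obtain ⟨μ, hμ⟩ := isInner_iterDual_one_iff.1 (hA _ hder)
  ext x
  have hx : φ x • φ x = μ (x * x) - μ (x * x) := congr($(hμ x) x)
  simpa using hx

end Complete

lemma map_eq_zero_of_weaklyAmenable (I : NonUnitalSubalgebra ℂ A) [CompleteSpace I]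
    (hI : WeaklyAmenable I) (φ : A →L[ℂ] ℂ) (hφ : ∀ x ∈ I, ∀ y ∈ I, φ (x * y) = 0) :
    ∀ x ∈ I, φ x = 0 := by
  have h := hI.eq_zero_of_map_mul_eq_zero (φ ∘L I.toSubmodule.subtypeL)
    fun x y => hφ x x.2 y y.2
  exact fun x hx => congr($h ⟨x, hx⟩)

variable [CompleteSpace A]

lemma IsDerivation.exists_innerDual_eq_of_weaklyAmenable {D : A →L[ℂ] (A →L[ℂ] ℂ)}
    (hD : IsDerivation (iterDual A 1) D) (I : NonUnitalSubalgebra ℂ A) [CompleteSpace I]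
    (hI : WeaklyAmenable I) : ∃ F : A →L[ℂ] ℂ, ∀ x ∈ I, ∀ u ∈ I, D x u = innerDual F x u := by
  let incl : I →L[ℂ] A := I.toSubmodule.subtypeL
  let d : I →L[ℂ] (I →L[ℂ] ℂ) := (compL ℂ I A ℂ).flip incl ∘L D ∘L incl
  have hd : IsDerivation (iterDual I 1) d :=
    isDerivation_iterDual_one_iff.2 fun x y u => isDerivation_iterDual_one_iff.1 hD x y u
  obtain ⟨f, hf⟩ := isInner_iterDual_one_iff.1 (hI d hd)
  obtain ⟨F, hF, -⟩ := exists_extension_norm_eq I.toSubmodule f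
  refine ⟨F, fun x hx u hu => ?_⟩
  have h : D x u = f (⟨u, hu⟩ * ⟨x, hx⟩) - f (⟨x, hx⟩ * ⟨u, hu⟩) :=
    congr($(hf ⟨x, hx⟩) ⟨u, hu⟩)
  rw [h, innerDual_apply, ← hF, ← hF]
  rfl

lemma IsDerivation.eq_zero_of_mem_ideal {D : A →L[ℂ] (A →L[ℂ] ℂ)}
    (hD : IsDerivation (iterDual A 1) D) (I : NonUnitalSubalgebra ℂ A) [CompleteSpace I]
    (hI : WeaklyAmenable I) (hl : ∀ a x, x ∈ I → a * x ∈ I) (hr : ∀ a x, x ∈ I → x * a ∈ I)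
    (h0 : ∀ x ∈ I, ∀ u ∈ I, D x u = 0) : ∀ x ∈ I, D x = 0 := by
  intro x hx
  ext c
  refine map_eq_zero_of_weaklyAmenable I hI (D.flip c) (fun y hy z hz => ?_) x hx
  rw [flip_apply, isDerivation_iterDual_one_iff.1 hD, h0 z hz _ (hl c y hy),
    h0 y hy _ (hr c z hz), add_zero]

lemma IsDerivation.apply_eq_zero_of_mem_ideal {D : A →L[ℂ] (A →L[ℂ] ℂ)}
    (hD : IsDerivation (iterDual A 1) D) (I : NonUnitalSubalgebra ℂ A) [CompleteSpace I]
    (hI : WeaklyAmenable I) (hl : ∀ a x, x ∈ I → a * x ∈ I) (h0 : ∀ x ∈ I, D x = 0) :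
    ∀ a, ∀ x ∈ I, D a x = 0 := by
  intro a
  refine map_eq_zero_of_weaklyAmenable I hI (D a) fun y hy z hz => ?_
  have h := isDerivation_iterDual_one_iff.1 hD a y z
  rwa [h0 _ (hl a y hy), h0 y hy, zero_apply, zero_apply, zero_add, eq_comm] at h

section Quotient

variable {Q : Type} [NonUnitalNormedRing Q] [NormedSpace ℂ Q]
  [IsScalarTower ℂ Q Q] [SMulCommClass ℂ Q Q] [CompleteSpace Q]

lemma IsDerivation.descend {D : A →L[ℂ] (A →L[ℂ] ℂ)} (hD : IsDerivation (iterDual A 1) D)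
    (π : A →L[ℂ] Q) (hπ_mul : ∀ a b, π (a * b) = π a * π b) (hπ : Function.Surjective π)
    {D' : Q →L[ℂ] (Q →L[ℂ] ℂ)} (hD' : ∀ a b, D' (π a) (π b) = D a b) :
    IsDerivation (iterDual Q 1) D' := by
  refine isDerivation_iterDual_one_iff.2 fun p q r => ?_
  obtain ⟨a, rfl⟩ := hπ p
  obtain ⟨b, rfl⟩ := hπ q
  obtain ⟨c, rfl⟩ := hπ r
  simp only [← hπ_mul, hD']
  exact isDerivation_iterDual_one_iff.1 hD a b c

lemma IsApproxInner.pullback {D' : Q →L[ℂ] (Q →L[ℂ] ℂ)} (hD' : IsApproxInner (iterDual Q 1) D')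
    (π : A →L[ℂ] Q) (hπ_mul : ∀ a b, π (a * b) = π a * π b) {D : A →L[ℂ] (A →L[ℂ] ℂ)}
    (hD : ∀ a b, D a b = D' (π a) (π b)) : IsApproxInner (iterDual A 1) D := by
  obtain ⟨ι, l, g, hl, hg⟩ := isApproxInner_iterDual_one_iff.1 hD'
  refine isApproxInner_iterDual_one_iff.2 ⟨ι, l, fun i => g i ∘L π, hl, fun a => ?_⟩
  let precomp : (Q →L[ℂ] ℂ) →L[ℂ] (A →L[ℂ] ℂ) := (compL ℂ A Q ℂ).flip π
  have hinner : ∀ i, innerDual (g i ∘L π) a = precomp (innerDual (g i) (π a)) := fun i => by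
    ext c
    simp [precomp, hπ_mul]
  have hDa : D a = precomp (D' (π a)) := by
    ext c
    simp [precomp, hD]
  simp only [hinner, hDa]
  exact (precomp.continuous.tendsto _).comp (hg (π a))

end Quotient

end DualDerivations

variable (A : Type) [NonUnitalNormedRing A] [NormedSpace ℂ A]
  [IsScalarTower ℂ A A] [SMulCommClass ℂ A A] [CompleteSpace A]

theorem approxWeaklyAmenable_of_ideal_weaklyAmenable
    (I : NonUnitalSubalgebra ℂ A)
    [CompleteSpace ↥I]
    (hl : ∀ (a x : A), x ∈ I → a * x ∈ I) (hr : ∀ (a x : A), x ∈ I → x * a ∈ I)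
    {Q : Type} [NonUnitalNormedRing Q] [NormedSpace ℂ Q]
    [IsScalarTower ℂ Q Q] [SMulCommClass ℂ Q Q] [CompleteSpace Q]
    (π : A →L[ℂ] Q)
    (hπ_mul : ∀ a b : A, π (a * b) = π a * π b)
    (hπ_surj : Function.Surjective π)
    (hπ_ker : ∀ a : A, π a = 0 ↔ a ∈ I)
    (hI : WeaklyAmenable ↥I) (hQ : ApproxWeaklyAmenable Q) :
    ApproxWeaklyAmenable A := by
  rintro (D : A →L[ℂ] (A →L[ℂ] ℂ)) hD
  obtain ⟨F, hF⟩ := hD.exists_innerDual_eq_of_weaklyAmenable I hI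
  set D₁ : A →L[ℂ] (A →L[ℂ] ℂ) := D - innerDual F
  have hD₁ : IsDerivation (iterDual A 1) D₁ := hD.sub (isDerivation_innerDual F)
  have hD₁_left : ∀ x ∈ I, D₁ x = 0 :=
    hD₁.eq_zero_of_mem_ideal I hI hl hr fun x hx u hu => by simp [D₁, hF x hx u hu]
  have hD₁_right : ∀ a, ∀ x ∈ I, D₁ a x = 0 :=
    hD₁.apply_eq_zero_of_mem_ideal I hI hl hD₁_left
  obtain ⟨D', hD'⟩ := π.exists_comp₂_eq_of_surjective hπ_surj D₁
    (fun x hx => hD₁_left x ((hπ_ker x).1 hx)) fun a x hx => hD₁_right a x ((hπ_ker x).1 hx)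
  have hD₁_approx : IsApproxInner (iterDual A 1) D₁ :=
    (hQ D' (hD₁.descend π hπ_mul hπ_surj hD')).pullback π hπ_mul fun a b => (hD' a b).symm
  have hD_eq : D₁ + innerDual F = D := sub_add_cancel D (innerDual F)
  exact hD_eq ▸ hD₁_approx.add_innerDual F
end

section
/- Let A be a non-unital Banach algebra and A# its unitization. If A# is approximately 2n-weakly amenable, then A is approximately 2n-weakly amenable. -/
open ContinuousLinearMap Filter Topology

open ContinuousLinearMap Filter Topology

variable {A : Type} [NonUnitalNormedRing A] [NormedSpace ℂ A]

variable (A) [IsScalarTower ℂ A A] [SMulCommClass ℂ A A] [CompleteSpace A]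

variable {A}

variable (A)

variable (A : Type) [NonUnitalNormedRing A] [NormedSpace ℂ A]
  [IsScalarTower ℂ A A] [SMulCommClass ℂ A A] [CompleteSpace A]

/-!
`A^(2n)` sits inside `(A#)^(2n)` through the iterated transposes `J` of the inclusion `A → A#`,
with left inverse the iterated transposes `P` of the projection `A# → A`. Transposing twice
preserves bimodule maps, so in even degree `J` is an `A`-bimodule map and `J ∘ D ∘ P₀` extends a
derivation `D` into `A^(2n)` to a derivation of `A#`. The projection `P₀` is not a bimodule map,
but it does carry commutators `ι a · y − y · ι a` to commutators `a · P₀ y − P₀ y · a`, and this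
property survives every transpose; applying `P` to an approximating net of the extension thus
gives one for `D`.
-/

namespace BBimod

variable {R S : Type} [NonUnitalNormedRing R] [NormedSpace ℂ R]
  [NonUnitalNormedRing S] [NormedSpace ℂ S]

-- `BBimod.dual` is not reducible, so instance search does not see its elements as functionals.
instance (M : BBimod R) : FunLike M.dual.carrier M.carrier ℂ :=
  inferInstanceAs (FunLike (M.carrier →L[ℂ] ℂ) M.carrier ℂ)

instance (M : BBimod R) : ContinuousLinearMapClass M.dual.carrier ℂ M.carrier ℂ :=
  inferInstanceAs (ContinuousLinearMapClass (M.carrier →L[ℂ] ℂ) ℂ M.carrier ℂ)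

@[ext] lemma dual_ext {M : BBimod R} {Λ Λ' : M.dual.carrier} (h : ∀ x, Λ x = Λ' x) : Λ = Λ' :=
  ContinuousLinearMap.ext h

@[simp] lemma dual_sub_apply (M : BBimod R) (Λ Λ' : M.dual.carrier) (x : M.carrier) :
    (Λ - Λ') x = Λ x - Λ' x := rfl

@[simp] lemma dual_lsmul_apply (M : BBimod R) (r : R) (Λ : M.dual.carrier) (x : M.carrier) :
    M.dual.lsmul r Λ x = Λ (M.rsmul r x) := rfl

@[simp] lemma dual_rsmul_apply (M : BBimod R) (r : R) (Λ : M.dual.carrier) (x : M.carrier) :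
    M.dual.rsmul r Λ x = Λ (M.lsmul r x) := rfl

lemma dual_lsmul_eq_one {M : BBimod R} {r : R} (h : M.rsmul r = 1) : M.dual.lsmul r = 1 := by
  ext Λ x
  simp [h]

lemma dual_rsmul_eq_one {M : BBimod R} {r : R} (h : M.lsmul r = 1) : M.dual.rsmul r = 1 := by
  ext Λ x
  simp [h]

/-- The transpose `Λ ↦ Λ ∘ u`. -/
noncomputable def dualMap {X : BBimod R} {Y : BBimod S} (u : X.carrier →L[ℂ] Y.carrier) :
    Y.dual.carrier →L[ℂ] X.dual.carrier :=
  (compL ℂ X.carrier Y.carrier ℂ).flip u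

@[simp] lemma dualMap_apply {X : BBimod R} {Y : BBimod S} (u : X.carrier →L[ℂ] Y.carrier)
    (Λ : Y.dual.carrier) (x : X.carrier) : dualMap u Λ x = Λ (u x) := rfl

lemma _root_.Function.LeftInverse.dualMap {X : BBimod R} {Y : BBimod S}
    {u : X.carrier →L[ℂ] Y.carrier} {v : Y.carrier →L[ℂ] X.carrier}
    (h : Function.LeftInverse v u) : Function.LeftInverse (dualMap u) (dualMap v) :=
  fun Λ => by ext x; simp [h x]

def Intertwines (X : BBimod R) (Y : BBimod S) (u : X.carrier →L[ℂ] Y.carrier) (r : R) (s : S) :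
    Prop :=
  (∀ x, u (X.lsmul r x) = Y.lsmul s (u x)) ∧ ∀ x, u (X.rsmul r x) = Y.rsmul s (u x)

def IntertwinesCommutator (X : BBimod R) (Y : BBimod S) (u : X.carrier →L[ℂ] Y.carrier)
    (r : R) (s : S) : Prop :=
  ∀ x, u (X.lsmul r x - X.rsmul r x) = Y.lsmul s (u x) - Y.rsmul s (u x)

variable {X : BBimod R} {Y : BBimod S} {u : X.carrier →L[ℂ] Y.carrier} {r : R} {s : S}

lemma Intertwines.dualMap (h : Intertwines X Y u r s) :
    Intertwines Y.dual X.dual (dualMap u) s r :=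
  ⟨fun Λ => by ext x; simp [h.2 x], fun Λ => by ext x; simp [h.1 x]⟩

lemma Intertwines.intertwinesCommutator (h : Intertwines X Y u r s) :
    IntertwinesCommutator X Y u r s := fun x => by
  rw [map_sub, h.1, h.2]

lemma IntertwinesCommutator.dualMap (h : IntertwinesCommutator X Y u r s) :
    IntertwinesCommutator Y.dual X.dual (dualMap u) s r := fun Λ => by
  ext x
  have hx := congrArg Λ (h x)
  simp only [map_sub] at hx
  simp only [map_sub, dual_sub_apply, dualMap_apply, dual_lsmul_apply, dual_rsmul_apply]
  linear_combination hx

end BBimod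

open BBimod

lemma iterDual_lsmul_one_and_rsmul_one (B : Type) [NormedRing B] [NormedSpace ℂ B]
    [IsScalarTower ℂ B B] [SMulCommClass ℂ B B] [CompleteSpace B] (k : ℕ) :
    (iterDual B k).lsmul 1 = 1 ∧ (iterDual B k).rsmul 1 = 1 := by
  induction k with
  | zero => exact ⟨ContinuousLinearMap.ext (one_mul (M := B)),
      ContinuousLinearMap.ext (mul_one (M := B))⟩
  | succ k ih => exact ⟨dual_lsmul_eq_one ih.2, dual_rsmul_eq_one ih.1⟩

lemma IsApproxInner.of_intertwinesCommutator {R S : Type} [NonUnitalNormedRing R]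
    [NormedSpace ℂ R] [NonUnitalNormedRing S] [NormedSpace ℂ S] {X : BBimod R} {Y : BBimod S}
    (φ : R → S) (P : Y.carrier →L[ℂ] X.carrier) (hP : ∀ r, IntertwinesCommutator Y X P (φ r) r)
    {E : S →L[ℂ] Y.carrier} (hE : IsApproxInner Y E) {D : R →L[ℂ] X.carrier}
    (hD : ∀ r, P (E (φ r)) = D r) : IsApproxInner X D := by
  obtain ⟨ι, l, y, hl, hy⟩ := hE
  refine ⟨ι, l, fun i => P (y i), hl, fun r => ?_⟩
  rw [← hD r]
  exact ((P.continuous.tendsto _).comp (hy (φ r))).congr fun i => hP r (y i)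

section Unitization

variable (B : Type) [NonUnitalNormedRing B] [NormedSpace ℂ B] [IsScalarTower ℂ B B]
  [SMulCommClass ℂ B B]

local notation "B♯" => WithLp 1 (Unitization ℂ B)

noncomputable def unitizationInr : B →L[ℂ] B♯ :=
  LinearMap.mkContinuous
    ((WithLp.linearEquiv 1 ℂ (Unitization ℂ B)).symm.toLinearMap.comp (Unitization.inrHom ℂ ℂ B))
    1 fun a => by simpa using (WithLp.unitization_norm_inr (𝕜 := ℂ) a).le

noncomputable def unitizationSnd : B♯ →L[ℂ] B :=
  LinearMap.mkContinuous
    ((Unitization.sndHom ℂ ℂ B).comp (WithLp.linearEquiv 1 ℂ (Unitization ℂ B)).toLinearMap)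
    1 fun x => by
      rw [one_mul, WithLp.unitization_norm_def]
      exact le_add_of_nonneg_left (norm_nonneg _)

variable {B}

@[simp] lemma unitizationInr_apply (a : B) :
    unitizationInr B a = WithLp.toLp 1 (a : Unitization ℂ B) := rfl

@[simp] lemma unitizationSnd_apply (x : B♯) : unitizationSnd B x = (WithLp.ofLp x).snd := rfl

lemma unitizationSnd_inr (a : B) : unitizationSnd B (unitizationInr B a) = a := by
  simp

lemma unitizationInr_mul (a b : B) :
    unitizationInr B (a * b) = unitizationInr B a * unitizationInr B b :=
  (WithLp.equiv 1 (Unitization ℂ B)).injective (by simp [WithLp.unitization_mul])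

lemma unitizationSnd_mul (x y : B♯) :
    unitizationSnd B (x * y) = (WithLp.ofLp x).fst • unitizationSnd B y
      + (WithLp.ofLp y).fst • unitizationSnd B x + unitizationSnd B x * unitizationSnd B y := by
  simp [WithLp.unitization_mul, Unitization.snd_mul]

lemma eq_fst_smul_one_add_unitizationInr (x : B♯) :
    x = (WithLp.ofLp x).fst • 1 + unitizationInr B (unitizationSnd B x) := by
  apply (WithLp.equiv 1 (Unitization ℂ B)).injective
  have hone : WithLp.ofLp (1 : B♯) = 1 := rfl
  ext <;> simp [hone]

lemma lsmul_eq_fst_smul_add_lsmul_inr {Y : BBimod B♯} (hY : Y.lsmul 1 = 1) (x : B♯)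
    (η : Y.carrier) :
    Y.lsmul x η = (WithLp.ofLp x).fst • η + Y.lsmul (unitizationInr B (unitizationSnd B x)) η := by
  conv_lhs => rw [eq_fst_smul_one_add_unitizationInr x]
  simp [Y.lsmul_add, Y.lsmul_smul, hY]

lemma rsmul_eq_fst_smul_add_rsmul_inr {Y : BBimod B♯} (hY : Y.rsmul 1 = 1) (x : B♯)
    (η : Y.carrier) :
    Y.rsmul x η = (WithLp.ofLp x).fst • η + Y.rsmul (unitizationInr B (unitizationSnd B x)) η := by
  conv_lhs => rw [eq_fst_smul_one_add_unitizationInr x]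
  simp [Y.rsmul_add, Y.rsmul_smul, hY]

lemma IsDerivation.comp_unitizationSnd {X : BBimod B} {Y : BBimod B♯}
    (hY : Y.lsmul 1 = 1 ∧ Y.rsmul 1 = 1) {u : X.carrier →L[ℂ] Y.carrier}
    (hu : ∀ a, Intertwines X Y u a (unitizationInr B a)) {D : B →L[ℂ] X.carrier}
    (hD : IsDerivation X D) : IsDerivation Y ((u.comp D).comp (unitizationSnd B)) := by
  intro x y
  simp only [comp_apply, unitizationSnd_mul, map_add, map_smul, hD (unitizationSnd B x),
    (hu _).1, (hu _).2, lsmul_eq_fst_smul_add_lsmul_inr hY.1 x,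
    rsmul_eq_fst_smul_add_rsmul_inr hY.2 y]
  abel

variable (B) [CompleteSpace B]

noncomputable def iterDualInclProj : ∀ k : ℕ,
    ((iterDual B k).carrier →L[ℂ] (iterDual B♯ k).carrier) ×
    ((iterDual B♯ k).carrier →L[ℂ] (iterDual B k).carrier)
  | 0 => (unitizationInr B, unitizationSnd B)
  | k + 1 => (dualMap (iterDualInclProj k).2, dualMap (iterDualInclProj k).1)

variable {B}

lemma iterDualInclProj_leftInverse :
    ∀ k : ℕ, Function.LeftInverse (iterDualInclProj B k).2 (iterDualInclProj B k).1
  | 0 => unitizationSnd_inr (B := B)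
  | k + 1 => (iterDualInclProj_leftInverse k).dualMap

lemma iterDualInclProj_incl_intertwines (m : ℕ) (a : B) :
    Intertwines (iterDual B (2 * m)) (iterDual B♯ (2 * m)) (iterDualInclProj B (2 * m)).1 a
      (unitizationInr B a) := by
  induction m with
  | zero => exact ⟨fun (x : B) => unitizationInr_mul a x, fun (x : B) => unitizationInr_mul x a⟩
  | succ m ih => exact ih.dualMap.dualMap

lemma iterDualInclProj_intertwinesCommutator (k : ℕ) (a : B) :
    IntertwinesCommutator (iterDual B k) (iterDual B♯ k) (iterDualInclProj B k).1 a
        (unitizationInr B a) ∧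
      IntertwinesCommutator (iterDual B♯ k) (iterDual B k) (iterDualInclProj B k).2
        (unitizationInr B a) a := by
  induction k with
  | zero =>
    refine ⟨(iterDualInclProj_incl_intertwines 0 a).intertwinesCommutator, fun (y : B♯) => ?_⟩
    change unitizationSnd B (unitizationInr B a * y - y * unitizationInr B a)
      = a * unitizationSnd B y - unitizationSnd B y * a
    rw [map_sub, unitizationSnd_mul, unitizationSnd_mul]
    simp
  | succ k ih => exact ⟨ih.2.dualMap, ih.1.dualMap⟩

end Unitization

theorem approx2nWeaklyAmenable_of_unitization
    (n : ℕ) (h : ApproxNWeaklyAmenable (WithLp 1 (Unitization ℂ A)) (2 * n)) :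
    ApproxNWeaklyAmenable A (2 * n) := by
  intro D hD
  have hE := IsDerivation.comp_unitizationSnd
    (iterDual_lsmul_one_and_rsmul_one (WithLp 1 (Unitization ℂ A)) (2 * n))
    (iterDualInclProj_incl_intertwines n) hD
  exact (h _ hE).of_intertwinesCommutator (unitizationInr A) (iterDualInclProj A (2 * n)).2
    (fun a => (iterDualInclProj_intertwinesCommutator (2 * n) a).2)
    fun a => by simp [iterDualInclProj_leftInverse _ _]
end
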